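/- Let (T, m) be a complete local (Noetherian) ring containing the rational numbers with dim T ≥ 1, and let P = {C_1, …, C_n} be a partition of Min(T) such that whenever p ∈ C_i is a singular minimal prime, C_i = {p}. Let q ∈ Spec(T) be a prime ideal that is either singular or not minimal. If (R, R ∩ m) is a CGIP-subring of T, then there exists a CGIP-subring (S, S ∩ m) of T such that R ⊆ S and S contains a generating set for q (i.e., there exist x_1, …, x_m ∈ S with q = (x_1, …, x_m)T). -/

import Mathlib

/-! Common definitions: regular/singular primes, catenary and universally catenary rings,
excellent local rings, quasi-local subrings, completions of subrings, the invariants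
`d₁(T)` and `d₂(T)`, feasible partitions and (C)IP-subrings, partitions of `Min(T)` and
(C)GIP-subrings, and witnesses for "T is the completion of a countable (excellent) local
ring". -/

universe u v

section RegularDefs

/-- A ring is a regular local ring if it is Noetherian, local, and its maximal ideal
can be generated by `dim R` many elements. -/
def IsRegularLocal (R : Type v) [CommRing R] : Prop :=
  ∃ _h : IsLocalRing R, IsNoetherianRing R ∧
    ∃ s : Finset R, Ideal.span (s : Set R) = IsLocalRing.maximalIdeal R ∧
      (s.card : WithBot (WithTop ℕ)) = ringKrullDim R

/-- A ring is regular if it is Noetherian and all its localizations at primes are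
regular local rings. -/
def IsRegularRingOfLocal (R : Type v) [CommRing R] : Prop :=
  IsNoetherianRing R ∧ ∀ (p : Ideal R) [p.IsPrime], IsRegularLocal (Localization.AtPrime p)

/-- A (prime) ideal `p` of `T` is nonsingular if `T_p` is a regular local ring. -/
def NonsingularAt {T : Type v} [CommRing T] (p : Ideal T) : Prop :=
  ∃ hp : p.IsPrime, IsRegularLocal (@Localization.AtPrime T _ p hp)

/-- `T_p` is a field. -/
def FieldAtPrime {T : Type v} [CommRing T] (p : Ideal T) : Prop :=
  ∃ hp : p.IsPrime, IsField (@Localization.AtPrime T _ p hp)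

end RegularDefs

section Catenary

/-- A chain is saturated if each step is a covering relation. -/
def IsSaturatedChain {α : Type v} [Preorder α] (c : LTSeries α) : Prop :=
  ∀ i : Fin c.length, c.toFun i.castSucc ⋖ c.toFun i.succ

/-- A ring is catenary if any two saturated chains of primes with the same endpoints
have the same length. -/
def IsCatenaryRing (R : Type v) [CommRing R] : Prop :=
  ∀ c₁ c₂ : LTSeries (PrimeSpectrum R),
    IsSaturatedChain c₁ → IsSaturatedChain c₂ →
      c₁.head = c₂.head → c₁.last = c₂.last → c₁.length = c₂.length

/-- A ring is universally catenary if every finite type algebra over it is catenary. -/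
def IsUniversallyCatenary (A : Type v) [CommRing A] : Prop :=
  ∀ (B : Type v) [CommRing B] [Algebra A B], Algebra.FiniteType A B → IsCatenaryRing B

end Catenary

section Excellent

/-- The formal fibers of a local ring `A` are geometrically regular: for every
prime `p` of `A` and every finite field extension `L` of the residue field
`k(p) = Frac(A/p)` (the residue field of the localization of `A` at `p`),
the ring `Â ⊗_A L` is regular, where `Â` is the completion of `A`
at its maximal ideal. -/
def HasGeomRegularFormalFibers (A : Type u) [CommRing A] [IsLocalRing A] : Prop :=
  ∀ (p : Ideal A) [p.IsPrime] (L : Type u) [Field L] [Algebra A L]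
    [Algebra (IsLocalRing.ResidueField (Localization.AtPrime p)) L]
    [IsScalarTower A (IsLocalRing.ResidueField (Localization.AtPrime p)) L],
    FiniteDimensional (IsLocalRing.ResidueField (Localization.AtPrime p)) L →
      IsRegularRingOfLocal
        (TensorProduct A (AdicCompletion (IsLocalRing.maximalIdeal A) A) L)

/-- A local ring is excellent if it is Noetherian, universally catenary,
and its formal fibers are geometrically regular. -/
def IsExcellentLocalRing (A : Type u) [CommRing A] [IsLocalRing A] : Prop :=
  IsNoetherianRing A ∧ IsUniversallyCatenary A ∧ HasGeomRegularFormalFibers A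

end Excellent

section Subrings

variable {T : Type u} [CommRing T] [IsLocalRing T]

/-- A subring `(R, R ∩ m)` of a local ring `(T, m)` is quasi-local with maximal
ideal `R ∩ m`. -/
def IsQuasiLocalSubring (R : Subring T) : Prop :=
  ∃ h : IsLocalRing R,
    @IsLocalRing.maximalIdeal R _ h = (IsLocalRing.maximalIdeal T).comap R.subtype

/-- The `(S ∩ m)`-adic completion of the subring `S` of the local ring `(T, m)` is equal
to `T`, compatibly with the inclusion `S ⊆ T`. -/
def IsCompletionOfSubring (S : Subring T) : Prop :=
  ∃ e : AdicCompletion ((IsLocalRing.maximalIdeal T).comap S.subtype) S ≃+* T,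
    ∀ s : S,
      e (algebraMap S (AdicCompletion ((IsLocalRing.maximalIdeal T).comap S.subtype) S) s)
        = (s : T)

end Subrings

section MinimalPrimeInvariants

variable (T : Type u) [CommRing T]

/-- The equivalence relation `∼₁` on the minimal primes of `T`: `p ∼₁ q` iff `p = q` or
(`T_p` and `T_q` are fields and `dim(T/p) = dim(T/q)`). -/
def sim1 : Setoid {p : Ideal T // p ∈ minimalPrimes T} where
  r p q := p = q ∨ (FieldAtPrime p.1 ∧ FieldAtPrime q.1 ∧
      ringKrullDim (T ⧸ p.1) = ringKrullDim (T ⧸ q.1))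
  iseqv := by
    constructor
    · exact fun x => Or.inl rfl
    · rintro x y (rfl | ⟨h1, h2, h3⟩)
      · exact Or.inl rfl
      · exact Or.inr ⟨h2, h1, h3.symm⟩
    · rintro x y z (rfl | ⟨h1, h2, h3⟩) h
      · exact h
      · rcases h with rfl | ⟨h4, h5, h6⟩
        · exact Or.inr ⟨h1, h2, h3⟩
        · exact Or.inr ⟨h1, h5, h3.trans h6⟩

/-- The equivalence relation `∼₂` on the minimal primes of `T`:
`p ∼₂ q` iff `dim(T/p) = dim(T/q)`. -/
def sim2 : Setoid {p : Ideal T // p ∈ minimalPrimes T} where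
  r p q := ringKrullDim (T ⧸ p.1) = ringKrullDim (T ⧸ q.1)
  iseqv := ⟨fun _ => rfl, Eq.symm, Eq.trans⟩

/-- `|d₁(T)|`, the number of equivalence classes of `Min(T)` under `∼₁`. -/
noncomputable def d1Card : ℕ := Nat.card (Quotient (sim1 T))

/-- `|d₂(T)|`, the number of equivalence classes of `Min(T)` under `∼₂`. -/
noncomputable def d2Card : ℕ := Nat.card (Quotient (sim2 T))

end MinimalPrimeInvariants

section Partitions

/-- A feasible partition `P = {C, {C_i}_{i=1}^n}` of a finite collection `C` of
incomparable non-maximal prime ideals of the local ring `(T, m)`: for every associated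
prime `r` of `T` there is some `q ∈ C` with `r ⊆ q`, and there is exactly one index `l`
such that every `q ∈ C` containing `r` lies in `C_l`. -/
structure FeasiblePartition (T : Type u) [CommRing T] [IsLocalRing T] (n : ℕ) where
  C : Set (Ideal T)
  part : Fin n → Set (Ideal T)
  finite : C.Finite
  primes : ∀ p ∈ C, p.IsPrime
  nonmaximal : ∀ p ∈ C, p ≠ IsLocalRing.maximalIdeal T
  incomparable : ∀ p ∈ C, ∀ q ∈ C, p ≠ q → ¬p ≤ q
  part_nonempty : ∀ i, (part i).Nonempty
  part_subset : ∀ i, part i ⊆ C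
  part_disjoint : ∀ i j, i ≠ j → Disjoint (part i) (part j)
  part_cover : ∀ p ∈ C, ∃ i, p ∈ part i
  feasible : ∀ r ∈ associatedPrimes T T,
    (∃ q ∈ C, r ≤ q) ∧ (∃! l, ∀ q ∈ C, r ≤ q → q ∈ part l)

variable {T : Type u} [CommRing T] [IsLocalRing T] {n : ℕ}

/-- An IP-subring (intersection-preserving subring) of `T` with respect to a
feasible partition `P`. -/
def IsIPSubring (P : FeasiblePartition T n) (R : Subring T) : Prop :=
  IsQuasiLocalSubring R ∧
  Infinite R ∧
  (∀ p ∈ P.C, ∀ q ∈ minimalPrimes T, q ≤ p → p.comap R.subtype = q.comap R.subtype) ∧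
  (∀ p ∈ P.C, ∀ p' ∈ P.C,
    ((∃ i, p ∈ P.part i ∧ p' ∈ P.part i) ↔ p.comap R.subtype = p'.comap R.subtype)) ∧
  (∀ p ∈ P.C, ∀ r : T, r ∈ R → r ∈ p → ∃ t : T, t * r = 0 ∧ t ∉ p)

/-- A CIP-subring is a countable IP-subring. -/
def IsCIPSubring (P : FeasiblePartition T n) (R : Subring T) : Prop :=
  IsIPSubring P R ∧ Countable R

end Partitions

section MinPartitions

/-- A partition `P = {C_1, …, C_n}` of `Min(T)` such that every class containing a
singular minimal prime is a singleton. -/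
structure MinPartition (T : Type u) [CommRing T] (n : ℕ) where
  part : Fin n → Set (Ideal T)
  part_nonempty : ∀ i, (part i).Nonempty
  part_subset : ∀ i, part i ⊆ minimalPrimes T
  part_disjoint : ∀ i j, i ≠ j → Disjoint (part i) (part j)
  part_cover : ∀ p ∈ minimalPrimes T, ∃ i, p ∈ part i
  singular_singleton : ∀ i, ∀ p ∈ part i, ¬NonsingularAt p → part i = {p}

variable {T : Type u} [CommRing T] [IsLocalRing T] {n : ℕ}

/-- A GIP-subring (generalized intersection-preserving subring) of `T` with respect to a
partition `P` of `Min(T)`. -/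
def IsGIPSubring (P : MinPartition T n) (S : Subring T) : Prop :=
  IsQuasiLocalSubring S ∧
  Infinite S ∧
  (∀ p ∈ minimalPrimes T, ∀ p' ∈ minimalPrimes T,
    (p.comap S.subtype = p'.comap S.subtype ↔ ∃ i, p ∈ P.part i ∧ p' ∈ P.part i)) ∧
  (∀ p ∈ minimalPrimes T, NonsingularAt p →
    ∀ a : T, a ∈ S → a ∈ p → ∃ t : T, t * a = 0 ∧ t ∉ p)

/-- A CGIP-subring is a countable GIP-subring. -/
def IsCGIPSubring (P : MinPartition T n) (S : Subring T) : Prop :=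
  IsGIPSubring P S ∧ Countable S

end MinPartitions

section Witness

/-- A countable excellent local ring whose completion (at its maximal ideal) is
isomorphic to `T`. -/
structure ExcellentCompletionWitness (T : Type u) [CommRing T] [IsLocalRing T] where
  A : Type u
  [commRing : CommRing A]
  [isLocal : IsLocalRing A]
  countable : Countable A
  excellent : IsExcellentLocalRing A
  completion : Nonempty (AdicCompletion (IsLocalRing.maximalIdeal A) A ≃+* T)

attribute [instance] ExcellentCompletionWitness.commRing ExcellentCompletionWitness.isLocal

/-- A countable local (Noetherian) ring whose completion (at its maximal ideal) is
isomorphic to `T`. -/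
structure LocalCompletionWitness (T : Type u) [CommRing T] [IsLocalRing T] where
  A : Type u
  [commRing : CommRing A]
  [isNoetherian : IsNoetherianRing A]
  [isLocal : IsLocalRing A]
  countable : Countable A
  completion : Nonempty (AdicCompletion (IsLocalRing.maximalIdeal A) A ≃+* T)

attribute [instance] LocalCompletionWitness.commRing LocalCompletionWitness.isNoetherian
  LocalCompletionWitness.isLocal

end Witness




namespace St13

instance countablePolynomial (R : Type*) [Semiring R] [Countable R] :
    Countable (Polynomial R) := by
  have : Countable (AddMonoidAlgebra R ℕ) := Function.Injective.countable (f := AddMonoidAlgebra.coeff) AddMonoidAlgebra.coeff_injective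
  exact Function.Injective.countable (f := Polynomial.toFinsupp)
    (fun a b => by cases a; cases b; simp)

variable {T : Type u} [CommRing T] [IsLocalRing T]

local notation "mT" => IsLocalRing.maximalIdeal T

lemma mem_of_forall_mem_add_pow [IsNoetherianRing T] {p : Ideal T} (hp : p.IsPrime)
    {x : T} (hx : ∀ s : ℕ, x ∈ p + mT ^ s) : x ∈ p := by
  set φ := Ideal.Quotient.mk p with hφ
  set M : Ideal (T ⧸ p) := Ideal.map φ mT with hM
  have hMne : M ≠ ⊤ := by
    intro h
    have hc : Ideal.comap φ M = ⊤ := by rw [h, Ideal.comap_top]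
    rw [hM, Ideal.comap_map_of_surjective _ Ideal.Quotient.mk_surjective,
      ← RingHom.ker_eq_comap_bot, Ideal.mk_ker] at hc
    have : mT ⊔ p = mT := sup_eq_left.mpr (IsLocalRing.le_maximalIdeal hp.ne_top)
    rw [this] at hc
    exact (Ideal.IsMaximal.ne_top (IsLocalRing.maximalIdeal.isMaximal T)) hc
  have hmem : ∀ s : ℕ, φ x ∈ M ^ s := by
    intro s
    have hxs : x ∈ p ⊔ mT ^ s := by rw [← Ideal.add_eq_sup]; exact hx s
    obtain ⟨a, ha, b, hb, hab⟩ := Submodule.mem_sup.mp hxs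
    have : φ x = φ b := by
      rw [← hab, map_add, Ideal.Quotient.eq_zero_iff_mem.mpr ha, zero_add]
    rw [this, ← Ideal.map_pow]
    exact Ideal.mem_map_of_mem _ hb
  have hbot : (⨅ s : ℕ, M ^ s) = ⊥ := Ideal.iInf_pow_eq_bot_of_isDomain M hMne
  have : φ x ∈ (⨅ s : ℕ, M ^ s) := Ideal.mem_iInf.mpr hmem
  rw [hbot] at this
  exact Ideal.Quotient.eq_zero_iff_mem.mp (Ideal.mem_bot.mp this)


lemma avoid [IsNoetherianRing T] [IsAdicComplete mT T]
    (ps : ℕ → Ideal T) (hps : ∀ j, (ps j).IsPrime) (hne : ∀ j, ps j ≠ mT)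
    (cs : ℕ → T) : ∃ L : T, ∀ j, L - cs j ∉ ps j := by
  have step : ∀ (a : T) (N : ℕ) (j : ℕ), ∃ (a' : T) (N' : ℕ),
      N < N' ∧ a' - a ∈ mT ^ N ∧ ∀ w ∈ mT ^ N', a' + w - cs j ∉ ps j := by
    intro a N j
    have h1 : ∃ x : T, x - a ∈ mT ^ N ∧ x - cs j ∉ ps j := by
      by_contra h
      push_neg at h
      have hbase : a - cs j ∈ ps j := by
        have := h a (by simp)
        simpa using this
      have hle : mT ^ N ≤ ps j := by
        intro w hw
        have := h (a + w) (by simpa using hw)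
        have : (a + w - cs j) - (a - cs j) ∈ ps j := (Ideal.sub_mem _ this hbase)
        simpa using this
      rcases Nat.eq_zero_or_pos N with hN | hN
      · rw [hN, pow_zero, Ideal.one_eq_top] at hle
        exact (hps j).ne_top (top_le_iff.mp hle)
      · have hmle : mT ≤ ps j := (Ideal.IsPrime.pow_le_iff (hN.ne')).mp hle
        exact hne j (le_antisymm (IsLocalRing.le_maximalIdeal (hps j).ne_top) hmle)
    obtain ⟨x, hx1, hx2⟩ := h1
    have h2 : ∃ s : ℕ, x - cs j ∉ ps j + mT ^ s := by
      by_contra h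
      push_neg at h
      exact hx2 (mem_of_forall_mem_add_pow (hps j) h)
    obtain ⟨s, hs⟩ := h2
    refine ⟨x, max (N + 1) s, lt_of_lt_of_le (Nat.lt_succ_self N) (le_max_left _ _), hx1, ?_⟩
    intro w hw hmem
    apply hs
    have hw' : w ∈ mT ^ s := Ideal.pow_le_pow_right (le_max_right _ _) hw
    have : x - cs j = (x + w - cs j) + (-w) := by ring
    rw [this, Ideal.add_eq_sup]
    exact Submodule.add_mem_sup hmem (neg_mem hw')
  choose fa fN hlt hdiff hav using step
  set sq : ℕ → T × ℕ := fun j => Nat.rec (0, 0) (fun j prev => (fa prev.1 prev.2 j, fN prev.1 prev.2 j)) j with hsq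
  set A : ℕ → T := fun j => (sq j).1 with hA
  set Nf : ℕ → ℕ := fun j => (sq j).2 with hNf
  have hsq_succ : ∀ j, A (j + 1) = fa (A j) (Nf j) j ∧ Nf (j + 1) = fN (A j) (Nf j) j :=
    fun j => ⟨rfl, rfl⟩
  have hNmono : StrictMono Nf := strictMono_nat_of_lt_succ fun j => by
    rw [(hsq_succ j).2]; exact hlt _ _ _
  have hNge : ∀ j, j ≤ Nf j := fun j => by
    induction j with
    | zero => exact Nat.zero_le _
    | succ k ih => exact Nat.succ_le_of_lt (lt_of_le_of_lt ih (hNmono (Nat.lt_succ_self k)))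
  have hAdiff : ∀ i j, i ≤ j → A j - A i ∈ mT ^ (Nf i) := by
    intro i j hij
    induction j, hij using Nat.le_induction with
    | base => simpa using (Ideal.zero_mem _)
    | succ k hk ih =>
      have h1 : A (k + 1) - A k ∈ mT ^ (Nf k) := by rw [(hsq_succ k).1]; exact hdiff _ _ _
      have h2 : A (k + 1) - A i = (A (k + 1) - A k) + (A k - A i) := by ring
      rw [h2]
      exact Ideal.add_mem _ (Ideal.pow_le_pow_right (hNmono.monotone hk) h1) ih
  have hcauchy : ∀ {m n : ℕ}, m ≤ n → A m ≡ A n [SMOD (mT ^ m • ⊤ : Ideal T)] := by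
    intro m n hmn
    rw [SModEq.sub_mem, smul_eq_mul, Ideal.mul_top]
    have := hAdiff m n hmn
    have h2 : A m - A n = -(A n - A m) := by ring
    rw [h2]
    exact neg_mem (Ideal.pow_le_pow_right (hNge m) this)
  obtain ⟨L, hL⟩ := IsPrecomplete.prec inferInstance @hcauchy
  refine ⟨L, fun j => ?_⟩
  have hw : L - A (j + 1) ∈ mT ^ (Nf (j + 1)) := by
    have h1 : A (Nf (j + 1)) ≡ L [SMOD (mT ^ (Nf (j + 1)) • ⊤ : Ideal T)] := hL _
    rw [SModEq.sub_mem, smul_eq_mul, Ideal.mul_top] at h1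
    have h2 : A (Nf (j + 1)) - A (j + 1) ∈ mT ^ (Nf (j + 1)) := hAdiff (j+1) (Nf (j+1)) (hNge _)
    have h3 : L - A (j + 1) = -(A (Nf (j+1)) - L) + (A (Nf (j+1)) - A (j + 1)) := by ring
    rw [h3]
    exact Ideal.add_mem _ (neg_mem h1) h2
  have hav' : ∀ w ∈ mT ^ (Nf (j + 1)), A (j + 1) + w - cs j ∉ ps j := by
    intro w hw'
    have e1 : A (j + 1) = fa (A j) (Nf j) j := (hsq_succ j).1
    have e2 : Nf (j + 1) = fN (A j) (Nf j) j := (hsq_succ j).2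
    rw [e1]
    exact hav (A j) (Nf j) j w (by rw [← e2]; exact hw')
  have := hav' (L - A (j + 1)) hw
  simpa using this

lemma avoid_sets [IsNoetherianRing T] [IsAdicComplete mT T]
    {ι : Type u} [Finite ι] (ps : ι → Ideal T) (hps : ∀ i, (ps i).IsPrime)
    (hne : ∀ i, ps i ≠ mT) (W : ι → Set T)
    (hW : ∀ i, ((Ideal.Quotient.mk (ps i)) '' (W i)).Countable) :
    ∃ L : T, ∀ i, L ∉ W i := by
  cases isEmpty_or_nonempty ι with
  | inl h => exact ⟨0, fun i => (h.false i).elim⟩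
  | inr h =>
    obtain ⟨g, hg⟩ := exists_surjective_nat ι
    have hfi : ∀ i, ∃ f : ℕ → T ⧸ (ps i), (Ideal.Quotient.mk (ps i)) '' (W i) ⊆ Set.range f :=
      fun i => Set.countable_iff_exists_subset_range.mp (hW i)
    choose f hf using hfi
    have hlift : ∀ (i : ι) (n : ℕ), ∃ c : T, Ideal.Quotient.mk (ps i) c = f i n :=
      fun i n => Ideal.Quotient.mk_surjective (f i n)
    choose c hc using hlift
    obtain ⟨L, hL⟩ := avoid (fun j => ps (g j.unpair.1)) (fun j => hps _) (fun j => hne _)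
      (fun j => c (g j.unpair.1) j.unpair.2)
    refine ⟨L, fun i hLW => ?_⟩
    have : Ideal.Quotient.mk (ps i) L ∈ Set.range (f i) := hf i ⟨L, hLW, rfl⟩
    obtain ⟨n, hn⟩ := this
    obtain ⟨a, ha⟩ := hg i
    have := hL (Nat.pair a n)
    rw [Nat.unpair_pair] at this
    simp only [ha] at this
    apply this
    rw [← Ideal.Quotient.eq_zero_iff_mem, map_sub, hc, hn, sub_self]

lemma min_ne_max (hdim : 1 ≤ ringKrullDim T) {p : Ideal T} (hp : p ∈ minimalPrimes T) :
    p ≠ mT := by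
  intro hpm
  have hsub : Subsingleton (PrimeSpectrum T) := by
    constructor
    intro P Q
    have h1 : ∀ (r : PrimeSpectrum T), r.asIdeal = p := by
      intro r
      have hle : r.asIdeal ≤ p := hpm ▸ IsLocalRing.le_maximalIdeal r.isPrime.ne_top
      exact le_antisymm hle (hp.2 ⟨r.isPrime, bot_le⟩ hle)
    exact PrimeSpectrum.ext ((h1 P).trans (h1 Q).symm)
  have h0 : ringKrullDim T ≤ 0 := Order.krullDim_nonpos_of_subsingleton
  have : (1 : WithBot (WithTop ℕ)) ≤ 0 := le_trans hdim h0
  norm_num at this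

lemma ann_of_nonsingular_minimal {p : Ideal T} (hmin : p ∈ minimalPrimes T)
    (hns : NonsingularAt p) {a : T} (ha : a ∈ p) : ∃ t : T, t * a = 0 ∧ t ∉ p := by
  obtain ⟨hp, hreg⟩ := hns
  haveI := hp
  haveI : Nontrivial (Localization.AtPrime p) := inferInstance
  have hsub : Subsingleton (PrimeSpectrum (Localization.AtPrime p)) := by
    constructor
    intro P Q
    have key : ∀ (r : PrimeSpectrum (Localization.AtPrime p)), r.asIdeal = P.asIdeal → True := fun _ _ => trivial
    set e := IsLocalization.AtPrime.orderIsoOfPrime (Localization.AtPrime p) p with he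
    have h1 : ∀ (r : PrimeSpectrum (Localization.AtPrime p)),
        (e ⟨r.asIdeal, r.isPrime⟩ : { P : Ideal T // P.IsPrime ∧ P ≤ p }).1 = p := by
      intro r
      obtain ⟨hpr, hle⟩ := (e ⟨r.asIdeal, r.isPrime⟩).2
      exact le_antisymm hle (hmin.2 ⟨hpr, bot_le⟩ hle)
    have h2 : e ⟨P.asIdeal, P.isPrime⟩ = e ⟨Q.asIdeal, Q.isPrime⟩ :=
      Subtype.ext ((h1 P).trans (h1 Q).symm)
    have h3 := e.injective h2
    exact PrimeSpectrum.ext (congrArg Subtype.val h3)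
  have hdim0 : ringKrullDim (Localization.AtPrime p) = 0 :=
    le_antisymm Order.krullDim_nonpos_of_subsingleton Order.krullDim_nonneg
  obtain ⟨_hl, _hn, s, hs, hcard⟩ := hreg
  rw [hdim0] at hcard
  have hcard0 : s.card = 0 := by
    have h : ((s.card : WithTop ℕ) : WithBot (WithTop ℕ)) = ((0 : WithTop ℕ) : WithBot (WithTop ℕ)) := hcard
    exact_mod_cast WithBot.coe_injective h
  rw [Finset.card_eq_zero.mp hcard0] at hs
  simp only [Finset.coe_empty, Ideal.span_empty] at hs
  have hmax : IsLocalRing.maximalIdeal (Localization.AtPrime p) = ⊥ := hs.symm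
  have hmem : algebraMap T (Localization.AtPrime p) a ∈
      IsLocalRing.maximalIdeal (Localization.AtPrime p) :=
    (IsLocalization.AtPrime.to_map_mem_maximal_iff _ p a).mpr ha
  rw [hmax, Ideal.mem_bot] at hmem
  obtain ⟨t, ht⟩ := (IsLocalization.map_eq_zero_iff p.primeCompl _ a).mp hmem
  exact ⟨t, ht, t.2⟩

section Main

variable {n : ℕ}

/-- Trace-uniformity of a subring w.r.t. the partition. -/
def USet (P : MinPartition T n) (S : Subring T) : Prop :=
  ∀ i : Fin n, ∀ p ∈ P.part i, ∀ p' ∈ P.part i, ∀ s ∈ S, (s ∈ p ↔ s ∈ p')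

/-- `x` is transcendental over `S` modulo `p`. -/
def TransMod (S : Subring T) (p : Ideal T) (x : T) : Prop :=
  ∀ f : Polynomial S,
    Polynomial.eval₂ ((Ideal.Quotient.mk p).comp S.subtype) (Ideal.Quotient.mk p x) f = 0 →
      ∀ k : ℕ, (f.coeff k : T) ∈ p

/-- The minimal primes other than `q`. -/
def BSet (q : Ideal T) : Set (Ideal T) := {p | p ∈ minimalPrimes T ∧ p ≠ q}

/-- Bad elements of `T ⧸ p`: roots of nonzero polynomials over the image of `S`. -/
def Zbad (S : Subring T) (p : Ideal T) : Set (T ⧸ p) :=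
  {z | ∃ f : Polynomial S, (∃ k, (f.coeff k : T) ∉ p) ∧
    Polynomial.eval₂ ((Ideal.Quotient.mk p).comp S.subtype) z f = 0}

lemma transMod_iff {S : Subring T} {p : Ideal T} {x : T} :
    TransMod S p x ↔ Ideal.Quotient.mk p x ∉ Zbad S p := by
  unfold TransMod Zbad
  constructor
  · rintro h ⟨f, ⟨k, hk⟩, hf⟩
    exact hk (h f hf k)
  · intro h f hf k
    by_contra hk
    exact h ⟨f, ⟨k, hk⟩, hf⟩

lemma zbad_countable (S : Subring T) [Countable S] (p : Ideal T) [p.IsPrime] :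
    (Zbad S p).Countable := by
  have hsub : Zbad S p ⊆ ⋃ f : Polynomial S, ⋃ (_ : ∃ k, ((f.coeff k : T) ∉ p)),
      {z | Polynomial.IsRoot (f.map ((Ideal.Quotient.mk p).comp S.subtype)) z} := by
    rintro z ⟨f, hk, hf⟩
    refine Set.mem_iUnion.mpr ⟨f, Set.mem_iUnion.mpr ⟨hk, ?_⟩⟩
    simpa [Polynomial.IsRoot, Polynomial.eval_map] using hf
  refine Set.Countable.mono hsub ?_
  refine Set.countable_iUnion fun f => Set.countable_iUnion fun hk => ?_
  apply Set.Finite.countable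
  apply Polynomial.finite_setOf_isRoot
  obtain ⟨k, hk⟩ := hk
  intro h0
  apply hk
  have h1 : (f.map ((Ideal.Quotient.mk p).comp S.subtype)).coeff k = 0 := by rw [h0]; simp
  rw [Polynomial.coeff_map] at h1
  exact Ideal.Quotient.eq_zero_iff_mem.mp h1

lemma transMod_not_mem {S : Subring T} {p : Ideal T} (hp : p.IsPrime) {x : T}
    (ht : TransMod S p x) : x ∉ p := by
  intro hx
  have h0 : Polynomial.eval₂ ((Ideal.Quotient.mk p).comp S.subtype)
      (Ideal.Quotient.mk p x) (Polynomial.X : Polynomial S) = 0 := by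
    rw [Polynomial.eval₂_X, Ideal.Quotient.eq_zero_iff_mem]
    exact hx
  have := ht Polynomial.X h0 1
  rw [Polynomial.coeff_X_one] at this
  exact hp.ne_top ((Ideal.eq_top_iff_one p).mpr (by simpa using this))

/-- Adjoining an element to a subring. -/
noncomputable def adjoin (S : Subring T) (x : T) : Subring T := (Polynomial.eval₂RingHom S.subtype x).range

lemma le_adjoin (S : Subring T) (x : T) : S ≤ adjoin S x := by
  intro s hs
  exact ⟨Polynomial.C (⟨s, hs⟩ : S), Polynomial.eval₂_C _ _⟩

lemma mem_adjoin_self (S : Subring T) (x : T) : x ∈ adjoin S x :=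
  ⟨Polynomial.X, Polynomial.eval₂_X _ _⟩

lemma adjoin_countable (S : Subring T) [Countable S] (x : T) : Countable (adjoin S x) := by
  have h1 : (adjoin S x : Set T) = Set.range (Polynomial.eval₂RingHom S.subtype x) := by
    rfl
  have h2 : (adjoin S x : Set T).Countable := by
    rw [h1]; exact Set.countable_range _
  exact h2.to_subtype

lemma mem_adjoin_iff {S : Subring T} {x t : T} :
    t ∈ adjoin S x ↔ ∃ f : Polynomial S, Polynomial.eval₂ S.subtype x f = t :=
  Iff.rfl

/-- Localization of a subring inside `T` at elements outside the maximal ideal. -/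
def locS (S : Subring T) : Subring T where
  carrier := {t | ∃ a ∈ S, ∃ b ∈ S, b ∉ mT ∧ t * b = a}
  one_mem' := ⟨1, S.one_mem, 1, S.one_mem,
    fun h => (Ideal.IsMaximal.ne_top (IsLocalRing.maximalIdeal.isMaximal T))
      ((Ideal.eq_top_iff_one _).mpr h), one_mul 1⟩
  zero_mem' := ⟨0, S.zero_mem, 1, S.one_mem,
    fun h => (Ideal.IsMaximal.ne_top (IsLocalRing.maximalIdeal.isMaximal T))
      ((Ideal.eq_top_iff_one _).mpr h), zero_mul 1⟩
  mul_mem' := by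
    rintro t₁ t₂ ⟨a₁, ha₁, b₁, hb₁, hbm₁, he₁⟩ ⟨a₂, ha₂, b₂, hb₂, hbm₂, he₂⟩
    refine ⟨a₁ * a₂, S.mul_mem ha₁ ha₂, b₁ * b₂, S.mul_mem hb₁ hb₂, ?_, ?_⟩
    · intro h
      rcases (Ideal.IsPrime.mem_or_mem
        (Ideal.IsMaximal.isPrime (IsLocalRing.maximalIdeal.isMaximal T)) h) with h | h
      · exact hbm₁ h
      · exact hbm₂ h
    · calc t₁ * t₂ * (b₁ * b₂) = (t₁ * b₁) * (t₂ * b₂) := by ring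
        _ = a₁ * a₂ := by rw [he₁, he₂]
  add_mem' := by
    rintro t₁ t₂ ⟨a₁, ha₁, b₁, hb₁, hbm₁, he₁⟩ ⟨a₂, ha₂, b₂, hb₂, hbm₂, he₂⟩
    refine ⟨a₁ * b₂ + a₂ * b₁, S.add_mem (S.mul_mem ha₁ hb₂) (S.mul_mem ha₂ hb₁),
      b₁ * b₂, S.mul_mem hb₁ hb₂, ?_, ?_⟩
    · intro h
      rcases (Ideal.IsPrime.mem_or_mem
        (Ideal.IsMaximal.isPrime (IsLocalRing.maximalIdeal.isMaximal T)) h) with h | h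
      · exact hbm₁ h
      · exact hbm₂ h
    · calc (t₁ + t₂) * (b₁ * b₂) = (t₁ * b₁) * b₂ + (t₂ * b₂) * b₁ := by ring
        _ = a₁ * b₂ + a₂ * b₁ := by rw [he₁, he₂]
  neg_mem' := by
    rintro t ⟨a, ha, b, hb, hbm, he⟩
    exact ⟨-a, S.neg_mem ha, b, hb, hbm, by rw [neg_mul, he]⟩

lemma le_locS (S : Subring T) : S ≤ locS S := by
  intro s hs
  exact ⟨s, hs, 1, S.one_mem,
    fun h => (Ideal.IsMaximal.ne_top (IsLocalRing.maximalIdeal.isMaximal T))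
      ((Ideal.eq_top_iff_one _).mpr h), mul_one s⟩

lemma locS_countable (S : Subring T) [Countable S] : Countable (locS S) := by
  have hS : (S : Set T).Countable := Set.countable_coe_iff.mp ‹_›
  have hsub : (locS S : Set T) ⊆ Set.image2 (fun a b => a * Ring.inverse b) (S : Set T) (S : Set T) := by
    rintro t ⟨a, ha, b, hb, hbm, he⟩
    have hu : IsUnit b := by
      by_contra h
      exact hbm ((IsLocalRing.mem_maximalIdeal b).mpr h)
    have h2 : t * b * Ring.inverse b = a * Ring.inverse b := by rw [he]
    rw [Ring.mul_inverse_cancel_right _ _ hu] at h2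
    exact ⟨a, ha, b, hb, h2.symm⟩
  exact ((hS.image2 hS _).mono hsub).to_subtype

lemma locS_mem_iff {S : Subring T} {p : Ideal T} (hp : p.IsPrime) {t : T}
    (ht : t ∈ locS S) : ∃ a ∈ S, (t ∈ p ↔ a ∈ p) := by
  obtain ⟨a, ha, b, hb, hbm, he⟩ := ht
  have hbp : b ∉ p := fun h => hbm (IsLocalRing.le_maximalIdeal hp.ne_top h)
  refine ⟨a, ha, ?_, ?_⟩
  · intro h
    rw [← he]
    exact Ideal.mul_mem_right _ _ h
  · intro h
    rw [← he] at h
    rcases hp.mem_or_mem h with h | h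
    · exact h
    · exact absurd h hbp

lemma USet_locS {P : MinPartition T n} {S : Subring T} (hU : USet P S) : USet P (locS S) := by
  intro i p hp p' hp' t ht
  have hprime : p.IsPrime := (P.part_subset i hp).1.1
  obtain ⟨a, ha, hiff⟩ := locS_mem_iff hprime ht
  have hprime' : p'.IsPrime := (P.part_subset i hp').1.1
  obtain ⟨a', ha', hiff'⟩ := locS_mem_iff hprime' ht
  -- need the same witness: redo with one witness
  obtain ⟨a₀, ha₀, b₀, hb₀, hbm₀, he₀⟩ := ht
  have hbp : b₀ ∉ p := fun h => hbm₀ (IsLocalRing.le_maximalIdeal hprime.ne_top h)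
  have hbp' : b₀ ∉ p' := fun h => hbm₀ (IsLocalRing.le_maximalIdeal hprime'.ne_top h)
  have h1 : t ∈ p ↔ a₀ ∈ p := by
    constructor
    · intro h; rw [← he₀]; exact Ideal.mul_mem_right _ _ h
    · intro h; rw [← he₀] at h
      rcases hprime.mem_or_mem h with h | h
      · exact h
      · exact absurd h hbp
  have h2 : t ∈ p' ↔ a₀ ∈ p' := by
    constructor
    · intro h; rw [← he₀]; exact Ideal.mul_mem_right _ _ h
    · intro h; rw [← he₀] at h
      rcases hprime'.mem_or_mem h with h | h
      · exact h
      · exact absurd h hbp'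
  rw [h1, h2]
  exact hU i p hp p' hp' a₀ ha₀

lemma locS_unit {S : Subring T} (x : locS S) (hx : (x : T) ∉ mT) : IsUnit x := by
  obtain ⟨t, a, ha, b, hb, hbm, he⟩ := x
  have hmp : (mT).IsPrime := Ideal.IsMaximal.isPrime (IsLocalRing.maximalIdeal.isMaximal T)
  have ham : a ∉ mT := by
    intro h
    rw [← he] at h
    rcases hmp.mem_or_mem h with h | h
    · exact hx h
    · exact hbm h
  have htu : IsUnit t := by
    by_contra h
    exact hx ((IsLocalRing.mem_maximalIdeal t).mpr h)
  set ti := Ring.inverse t with hti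
  have hti_mem : ti ∈ locS S := by
    refine ⟨b, hb, a, ha, ham, ?_⟩
    rw [hti]
    calc Ring.inverse t * a = Ring.inverse t * (t * b) := by rw [he]
      _ = b := Ring.inverse_mul_cancel_left _ _ htu
  refine IsUnit.of_mul_eq_one (M := locS S) (⟨ti, hti_mem⟩ : locS S) ?_
  apply Subtype.ext
  show t * ti = 1
  exact Ring.mul_inverse_cancel _ htu

lemma locS_nonunit {S : Subring T} (x : locS S) (hx : (x : T) ∈ mT) : ¬IsUnit x := by
  rintro ⟨u, hu⟩
  have h1 : (u : locS S) * (u⁻¹ : (locS S)ˣ) = 1 := u.mul_inv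
  have h2 : ((u : locS S) : T) * (((u⁻¹ : (locS S)ˣ) : locS S) : T) = 1 := by
    exact_mod_cast congrArg (fun y : locS S => (y : T)) h1
  have hux : ((u : locS S) : T) = (x : T) := by rw [hu]
  have : (1 : T) ∈ mT := by
    rw [← h2, hux]
    exact Ideal.mul_mem_right _ _ hx
  exact (Ideal.IsMaximal.ne_top (IsLocalRing.maximalIdeal.isMaximal T))
    ((Ideal.eq_top_iff_one _).mpr this)

lemma locS_quasiLocal (S : Subring T) [Nontrivial T] : IsQuasiLocalSubring (locS S) := by
  have hloc : IsLocalRing (locS S) := by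
    apply IsLocalRing.of_nonunits_add
    intro a b ha hb
    have ha' : (a : T) ∈ mT := by
      by_contra h
      exact ha (locS_unit a h)
    have hb' : (b : T) ∈ mT := by
      by_contra h
      exact hb (locS_unit b h)
    exact locS_nonunit (a + b) (Ideal.add_mem _ ha' hb')
  refine ⟨hloc, ?_⟩
  ext x
  rw [IsLocalRing.mem_maximalIdeal, Ideal.mem_comap]
  show x ∈ nonunits _ ↔ (x : T) ∈ mT
  constructor
  · intro h
    by_contra h2
    exact h (locS_unit x h2)
  · intro h
    exact locS_nonunit x h

lemma pair_in_B {P : MinPartition T n} {q : Ideal T}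
    (hqs : ¬NonsingularAt q ∨ q ∉ minimalPrimes T)
    {i : Fin n} {p p' : Ideal T} (hp : p ∈ P.part i) (hp' : p' ∈ P.part i) (hne : p ≠ p') :
    p ∈ BSet q := by
  refine ⟨P.part_subset i hp, ?_⟩
  rintro rfl
  have hqmin : p ∈ minimalPrimes T := P.part_subset i hp
  have hns : ¬NonsingularAt p := hqs.resolve_right (fun h => h hqmin)
  have hsing := P.singular_singleton i p hp hns
  rw [hsing] at hp'
  exact hne hp'.symm

lemma USet_adjoin {P : MinPartition T n} {q : Ideal T}
    (hqs : ¬NonsingularAt q ∨ q ∉ minimalPrimes T)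
    {S : Subring T} {x : T} (hU : USet P S) (ht : ∀ p ∈ BSet q, TransMod S p x) :
    USet P (adjoin S x) := by
  intro i p hp p' hp' s hs
  rcases eq_or_ne p p' with rfl | hne
  · exact Iff.rfl
  obtain ⟨f, hf⟩ := hs
  have key : ∀ pa, pa ∈ P.part i → ∀ pb, pb ∈ P.part i → pa ∈ BSet q →
      Polynomial.eval₂ S.subtype x f ∈ pa → Polynomial.eval₂ S.subtype x f ∈ pb := by
    intro pa hpa pb hpb hpaB hmem
    have h0 : Ideal.Quotient.mk pa (Polynomial.eval₂ S.subtype x f) = 0 :=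
      Ideal.Quotient.eq_zero_iff_mem.mpr hmem
    rw [Polynomial.hom_eval₂] at h0
    have hcoeff := ht pa hpaB f h0
    rw [Polynomial.eval₂_eq_sum_range]
    refine Ideal.sum_mem _ fun k _ => Ideal.mul_mem_right _ _ ?_
    exact (hU i pa hpa pb hpb _ (f.coeff k).2).mp (hcoeff k)
  have hf' : Polynomial.eval₂RingHom S.subtype x f = Polynomial.eval₂ S.subtype x f := rfl
  rw [← hf, hf']
  exact ⟨key p hp p' hp' (pair_in_B hqs hp hp' hne),
         key p' hp' p hp (pair_in_B hqs hp' hp hne.symm)⟩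

variable [IsNoetherianRing T] [IsAdicComplete (IsLocalRing.maximalIdeal T) T]

lemma BSet_finite (q : Ideal T) : (BSet (T := T) q).Finite :=
  (minimalPrimes.finite_of_isNoetherianRing T).subset fun _ hp => hp.1

lemma exists_transMod_mul (hdim : 1 ≤ ringKrullDim T) (q : Ideal T)
    (S : Subring T) [Countable S] {x : T} (hx : ∀ p ∈ BSet q, x ∉ p) :
    ∃ u : T, ∀ p ∈ BSet q, TransMod S p (x * u) := by
  haveI : Finite (BSet (T := T) q) := (BSet_finite q).to_subtype
  have hprime : ∀ p : BSet (T := T) q, (p : Ideal T).IsPrime := fun p => p.2.1.1.1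
  have hcnt : ∀ p : BSet (T := T) q,
      ((Ideal.Quotient.mk (p : Ideal T)) ''
        {u : T | ¬TransMod S (p : Ideal T) (x * u)}).Countable := by
    intro p
    haveI := hprime p
    have hx0 : Ideal.Quotient.mk (p : Ideal T) x ≠ 0 := fun h =>
      hx p p.2 (Ideal.Quotient.eq_zero_iff_mem.mp h)
    have hinj : Function.Injective
        (fun z : T ⧸ (p : Ideal T) => Ideal.Quotient.mk (p : Ideal T) x * z) :=
      fun a b hab => mul_left_cancel₀ hx0 hab
    have hsub : (Ideal.Quotient.mk (p : Ideal T)) ''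
        {u : T | ¬TransMod S (p : Ideal T) (x * u)} ⊆
        (fun z => Ideal.Quotient.mk (p : Ideal T) x * z) ⁻¹' (Zbad S (p : Ideal T)) := by
      rintro w ⟨u, hu, rfl⟩
      have hz : Ideal.Quotient.mk (p : Ideal T) (x * u) ∈ Zbad S (p : Ideal T) := by
        by_contra hzz
        exact hu (transMod_iff.mpr hzz)
      rw [map_mul] at hz
      exact hz
    exact ((zbad_countable S (p : Ideal T)).preimage hinj).mono hsub
  obtain ⟨L, hL⟩ := avoid_sets (fun p : BSet (T := T) q => (p : Ideal T))
    hprime (fun p => min_ne_max hdim p.2.1)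
    (fun p => {u : T | ¬TransMod S (p : Ideal T) (x * u)}) hcnt
  refine ⟨L, fun p hp => ?_⟩
  by_contra h
  exact hL ⟨p, hp⟩ h

lemma exists_transMod_add (hdim : 1 ≤ ringKrullDim T) (q : Ideal T)
    (S : Subring T) [Countable S] {y : T} (z : T) (hy : ∀ p ∈ BSet q, y ∉ p) :
    ∃ c : T, ∀ p ∈ BSet q, TransMod S p (z + c * y) := by
  haveI : Finite (BSet (T := T) q) := (BSet_finite q).to_subtype
  have hprime : ∀ p : BSet (T := T) q, (p : Ideal T).IsPrime := fun p => p.2.1.1.1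
  have hcnt : ∀ p : BSet (T := T) q,
      ((Ideal.Quotient.mk (p : Ideal T)) ''
        {c : T | ¬TransMod S (p : Ideal T) (z + c * y)}).Countable := by
    intro p
    haveI := hprime p
    have hy0 : Ideal.Quotient.mk (p : Ideal T) y ≠ 0 := fun h =>
      hy p p.2 (Ideal.Quotient.eq_zero_iff_mem.mp h)
    have hinj : Function.Injective
        (fun w : T ⧸ (p : Ideal T) =>
          Ideal.Quotient.mk (p : Ideal T) z + w * Ideal.Quotient.mk (p : Ideal T) y) := by
      intro a b hab
      simp only [add_right_inj] at hab
      exact mul_right_cancel₀ hy0 hab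
    have hsub : (Ideal.Quotient.mk (p : Ideal T)) ''
        {c : T | ¬TransMod S (p : Ideal T) (z + c * y)} ⊆
        (fun w => Ideal.Quotient.mk (p : Ideal T) z + w * Ideal.Quotient.mk (p : Ideal T) y)
          ⁻¹' (Zbad S (p : Ideal T)) := by
      rintro w ⟨c, hc, rfl⟩
      have hz : Ideal.Quotient.mk (p : Ideal T) (z + c * y) ∈ Zbad S (p : Ideal T) := by
        by_contra hzz
        exact hc (transMod_iff.mpr hzz)
      rw [map_add, map_mul] at hz
      exact hz
    exact ((zbad_countable S (p : Ideal T)).preimage hinj).mono hsub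
  obtain ⟨L, hL⟩ := avoid_sets (fun p : BSet (T := T) q => (p : Ideal T))
    hprime (fun p => min_ne_max hdim p.2.1)
    (fun p => {c : T | ¬TransMod S (p : Ideal T) (z + c * y)}) hcnt
  refine ⟨L, fun p hp => ?_⟩
  by_contra h
  exact hL ⟨p, hp⟩ h

lemma build (hdim : 1 ≤ ringKrullDim T) {P : MinPartition T n} {q : Ideal T}
    (hqs : ¬NonsingularAt q ∨ q ∉ minimalPrimes T)
    {y : T} (hy : ∀ p ∈ BSet q, y ∉ p) (l : List T) :
    ∀ S : Subring T, Countable S → USet P S →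
    ∃ S' : Subring T, S ≤ S' ∧ Countable S' ∧ USet P S' ∧
      ∃ gl : List T, (∀ g ∈ gl, g ∈ S') ∧
        (∀ g ∈ gl, ∃ z ∈ l, ∃ c : T, g = z + c * y) ∧
        (∀ z ∈ l, ∃ g ∈ gl, ∃ c : T, g = z + c * y) := by
  induction l with
  | nil =>
    intro S hc hU
    exact ⟨S, le_rfl, hc, hU, [], by simp, by simp, by simp⟩
  | cons z tl ih =>
    intro S hc hU
    haveI := hc
    obtain ⟨c, hcT⟩ := exists_transMod_add hdim q S z hy
    have hU' : USet P (adjoin S (z + c * y)) := USet_adjoin hqs hU hcT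
    obtain ⟨S', h1, h2, h3, gl, hg1, hg2, hg3⟩ :=
      ih (adjoin S (z + c * y)) (adjoin_countable S (z + c * y)) hU'
    refine ⟨S', le_trans (le_adjoin S (z + c * y)) h1, h2, h3, (z + c * y) :: gl, ?_, ?_, ?_⟩
    · intro g' hg'
      rcases List.mem_cons.mp hg' with rfl | hg'
      · exact h1 (mem_adjoin_self S (z + c * y))
      · exact hg1 g' hg'
    · intro g' hg'
      rcases List.mem_cons.mp hg' with rfl | hg'
      · exact ⟨z, List.mem_cons_self, c, rfl⟩
      · obtain ⟨z', hz', c', hc'⟩ := hg2 g' hg'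
        exact ⟨z', List.mem_cons_of_mem _ hz', c', hc'⟩
    · intro z' hz'
      rcases List.mem_cons.mp hz' with rfl | hz'
      · exact ⟨z' + c * y, List.mem_cons_self, c, rfl⟩
      · obtain ⟨g', hgl, c', hc'⟩ := hg3 z' hz'
        exact ⟨g', List.mem_cons_of_mem _ hgl, c', hc'⟩

end Main
end St13

/-- Let `(T, m)` be a complete local ring containing `ℚ` with
`dim T ≥ 1` and `P` a partition of `Min(T)` in which singular minimal primes are alone in
their class. Let `q` be a prime ideal of `T` which is either singular or not minimal. If
`R` is a CGIP-subring of `T`, there is a CGIP-subring `S` of `T` with `R ⊆ S` containing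
a generating set for `q`. -/
theorem statement_13 (T : Type u) [CommRing T] [IsNoetherianRing T] [IsLocalRing T]
    [IsAdicComplete (IsLocalRing.maximalIdeal T) T] [Algebra ℚ T]
    (hdim : 1 ≤ ringKrullDim T) {n : ℕ} (P : MinPartition T n)
    (q : Ideal T) (hq : q.IsPrime)
    (hqs : ¬NonsingularAt q ∨ q ∉ minimalPrimes T)
    (R : Subring T) (hR : IsCGIPSubring P R) :
    ∃ S : Subring T, IsCGIPSubring P S ∧ R ≤ S ∧
      ∃ G : Finset T, (G : Set T) ⊆ (S : Set T) ∧ Ideal.span (G : Set T) = q := by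
  classical
  haveI hRcnt : Countable R := hR.2
  obtain ⟨⟨hql, hinf, h3R, h4R⟩, -⟩ := hR
  have hUR : St13.USet P R := by
    intro i p hp p' hp' s hs
    have hcomap := (h3R p (P.part_subset i hp) p' (P.part_subset i hp')).mpr ⟨i, hp, hp'⟩
    have := Ideal.ext_iff.mp hcomap (⟨s, hs⟩ : R)
    simpa [Ideal.mem_comap] using this
  obtain ⟨zs, hzs⟩ := IsNoetherian.noetherian q
  have hBfin : (St13.BSet (T := T) q).Finite := St13.BSet_finite q
  have hxex : ∃ x ∈ q, ∀ p ∈ St13.BSet (T := T) q, x ∉ p := by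
    by_contra h
    push_neg at h
    have hsub : (q : Set T) ⊆ ⋃ p ∈ (↑hBfin.toFinset : Set (Ideal T)), ↑(id p : Ideal T) := by
      intro x hx
      obtain ⟨p, hp, hxp⟩ := h x hx
      exact Set.mem_biUnion (by rwa [Finset.mem_coe, hBfin.mem_toFinset]) hxp
    rw [Ideal.subset_union_prime ⊥ ⊥ (fun p hp _ _ => by
      rw [hBfin.mem_toFinset] at hp
      exact hp.1.1.1)] at hsub
    obtain ⟨p, hp, hqle⟩ := hsub
    rw [hBfin.mem_toFinset] at hp
    have : p ≤ q := hp.1.2 ⟨hq, bot_le⟩ hqle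
    exact hp.2 (le_antisymm this hqle)
  obtain ⟨x, hxq, hxB⟩ := hxex
  obtain ⟨u, hu⟩ := St13.exists_transMod_mul hdim q R hxB
  have hyq : x * u ∈ q := Ideal.mul_mem_right _ _ hxq
  have hyB : ∀ p ∈ St13.BSet (T := T) q, x * u ∉ p := fun p hp =>
    St13.transMod_not_mem hp.1.1.1 (hu p hp)
  have hU1 : St13.USet P (St13.adjoin R (x * u)) := St13.USet_adjoin hqs hUR hu
  obtain ⟨S', hle1, hcnt', hU', gl, hgmem, hg2, hg3⟩ :=
    St13.build hdim hqs hyB zs.toList (St13.adjoin R (x * u))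
      (St13.adjoin_countable R (x * u)) hU1
  haveI hcntS' : Countable S' := hcnt'
  have hleS : S' ≤ St13.locS S' := St13.le_locS S'
  have hRS : R ≤ St13.locS S' := le_trans (le_trans (St13.le_adjoin R (x * u)) hle1) hleS
  have hyS : x * u ∈ St13.locS S' := hleS (hle1 (St13.mem_adjoin_self R (x * u)))
  haveI hcntS : Countable (St13.locS S') := St13.locS_countable S'
  have hUS : St13.USet P (St13.locS S') := St13.USet_locS hU'
  refine ⟨St13.locS S', ⟨⟨St13.locS_quasiLocal S', ?_, ?_, ?_⟩, hcntS⟩, hRS, ?_⟩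
  · haveI := hinf
    exact Infinite.of_injective (fun r : R => (⟨(r : T), hRS r.2⟩ : St13.locS S'))
      (fun a b hab => Subtype.ext (congrArg (fun t : St13.locS S' => (t : T)) hab))
  · intro p hpmin p' hp'min
    constructor
    · intro hcomap
      apply (h3R p hpmin p' hp'min).mp
      ext r
      simp only [Ideal.mem_comap]
      have := Ideal.ext_iff.mp hcomap (⟨(r : T), hRS r.2⟩ : St13.locS S')
      simpa [Ideal.mem_comap] using this
    · rintro ⟨i, hpi, hp'i⟩
      ext s
      simp only [Ideal.mem_comap]
      exact hUS i p hpi p' hp'i (s : T) s.2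
  · intro p hpmin hns a _ ha
    exact St13.ann_of_nonsingular_minimal hpmin hns ha
  · refine ⟨insert (x * u) gl.toFinset, ?_, ?_⟩
    · intro t ht
      rw [Finset.coe_insert, Set.mem_insert_iff] at ht
      rcases ht with rfl | ht
      · exact hyS
      · rw [Finset.mem_coe, List.mem_toFinset] at ht
        exact hleS (hgmem t ht)
    · apply le_antisymm
      · rw [Ideal.span_le]
        intro t ht
        rw [Finset.coe_insert, Set.mem_insert_iff] at ht
        rcases ht with rfl | ht
        · exact hyq
        · rw [Finset.mem_coe, List.mem_toFinset] at ht
          obtain ⟨z, hz, c, rfl⟩ := hg2 t ht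
          have hzq : z ∈ q := by
            rw [← hzs]
            exact Ideal.subset_span (Finset.mem_coe.mpr (Finset.mem_toList.mp hz))
          exact Ideal.add_mem _ hzq (Ideal.mul_mem_left _ _ hyq)
      · rw [← hzs, Submodule.span_le]
        intro z hz
        have hzl : z ∈ zs.toList := Finset.mem_toList.mpr (Finset.mem_coe.mp hz)
        obtain ⟨g, hgl, c, hgc⟩ := hg3 z hzl
        have hzeq : z = g - c * (x * u) := by rw [hgc]; ring
        rw [hzeq]
        refine Ideal.sub_mem _ ?_ (Ideal.mul_mem_left _ _ ?_)
        · exact Ideal.subset_span (by simp [List.mem_toFinset, hgl])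
        · exact Ideal.subset_span (by simp)
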